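/- Let n ≥ 1, 0 ≤ α < π/2, and let A, B ∈ Mₙ(ℂ) satisfy A, B ∈ S_α. Then cos(α)²·max(w(A), w(B)) ≤ w(A + B). -/

import Mathlib

open Matrix MeasureTheory
open scoped ComplexOrder

attribute [local instance] Matrix.normedAddCommGroup Matrix.normedSpace

/-- The numerical radius of a complex `n × n` matrix. -/
noncomputable def nradius {n : ℕ} (A : Matrix (Fin n) (Fin n) ℂ) : ℝ :=
  sSup {r : ℝ | ∃ x : EuclideanSpace ℂ (Fin n), ‖x‖ = 1 ∧
    r = ‖(inner ℂ x (Matrix.toEuclideanCLM (𝕜 := ℂ) A x) : ℂ)‖}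

/-- The operator (spectral) norm of a complex `n × n` matrix. -/
noncomputable def opNorm {n : ℕ} (A : Matrix (Fin n) (Fin n) ℂ) : ℝ :=
  ‖(Matrix.toEuclideanCLM (𝕜 := ℂ) A :
      EuclideanSpace ℂ (Fin n) →L[ℂ] EuclideanSpace ℂ (Fin n))‖

/-- The real part `(A + Aᴴ)/2` of a matrix. -/
noncomputable def matRe {n : ℕ} (A : Matrix (Fin n) (Fin n) ℂ) : Matrix (Fin n) (Fin n) ℂ :=
  (1 / 2 : ℂ) • (A + Aᴴ)

/-- `A ∈ S_α` : `Re A` is positive definite and the numerical range of `A` lies in the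
sector `{z : |Im z| ≤ tan α · Re z}`. -/
def InSector {n : ℕ} (α : ℝ) (A : Matrix (Fin n) (Fin n) ℂ) : Prop :=
  (matRe A).PosDef ∧ ∀ x : EuclideanSpace ℂ (Fin n), ‖x‖ = 1 →
    |(inner ℂ x (Matrix.toEuclideanCLM (𝕜 := ℂ) A x) : ℂ).im| ≤
      Real.tan α * ((inner ℂ x (Matrix.toEuclideanCLM (𝕜 := ℂ) A x) : ℂ)).re

/-!
For a unit vector `x`, the sector condition `|Im z| ≤ tan α · Re z` on `z = ⟨Ax, x⟩` gives
`|cos α| · |z| ≤ Re z`. Since `Re ⟨Bx, x⟩ ≥ 0`, also `Re z ≤ Re ⟨(A + B)x, x⟩ ≤ w(A + B)`, hence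
`|cos α| · w(A) ≤ w(A + B)`; and `cos² α ≤ |cos α|`.
-/

open scoped InnerProductSpace

theorem Complex.abs_cos_mul_norm_le_re {z : ℂ} {α : ℝ} (hz : |z.im| ≤ Real.tan α * z.re)
    (hre : 0 ≤ z.re) : |Real.cos α| * ‖z‖ ≤ z.re := by
  have him : z.im ^ 2 * Real.cos α ^ 2 ≤ z.re ^ 2 * Real.sin α ^ 2 := by
    rcases eq_or_ne (Real.cos α) 0 with hc | hc
    · rw [hc, zero_pow two_ne_zero, mul_zero]; positivity
    · have hsin : Real.tan α * Real.cos α = Real.sin α := by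
        rw [Real.tan_eq_sin_div_cos]; field_simp
      calc z.im ^ 2 * Real.cos α ^ 2 = |z.im| ^ 2 * Real.cos α ^ 2 := by rw [sq_abs]
        _ ≤ (Real.tan α * z.re) ^ 2 * Real.cos α ^ 2 := by gcongr
        _ = z.re ^ 2 * Real.sin α ^ 2 := by rw [← hsin]; ring
  refine (pow_le_pow_iff_left₀ (by positivity) hre two_ne_zero).1 ?_
  rw [mul_pow, sq_abs, Complex.sq_norm, Complex.normSq_apply]
  nlinarith [Real.sin_sq_add_cos_sq α]

section NumericalRadius

variable {n : ℕ}

theorem re_inner_toEuclideanCLM_matRe (A : Matrix (Fin n) (Fin n) ℂ)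
    (x : EuclideanSpace ℂ (Fin n)) :
    (⟪x, toEuclideanCLM (𝕜 := ℂ) (matRe A) x⟫_ℂ).re = (⟪x, toEuclideanCLM (𝕜 := ℂ) A x⟫_ℂ).re := by
  have hadj :
      (⟪x, toEuclideanCLM (𝕜 := ℂ) Aᴴ x⟫_ℂ).re = (⟪x, toEuclideanCLM (𝕜 := ℂ) A x⟫_ℂ).re := by
    rw [← star_eq_conjTranspose, map_star, ContinuousLinearMap.star_eq_adjoint,
      ContinuousLinearMap.adjoint_inner_right, ← inner_conj_symm, Complex.conj_re]
  rw [matRe, map_smul, map_add, _root_.smul_apply, _root_.add_apply, inner_smul_right,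
    inner_add_right, one_div, ← Complex.ofReal_ofNat, ← Complex.ofReal_inv, Complex.re_ofReal_mul,
    Complex.add_re, hadj]
  ring

theorem re_inner_toEuclideanCLM_nonneg {A : Matrix (Fin n) (Fin n) ℂ} (hA : (matRe A).PosSemidef)
    (x : EuclideanSpace ℂ (Fin n)) : 0 ≤ (⟪x, toEuclideanCLM (𝕜 := ℂ) A x⟫_ℂ).re := by
  rw [← re_inner_toEuclideanCLM_matRe]
  exact (isPositive_toEuclideanLin_iff.mpr hA).re_inner_nonneg_right x

theorem bddAbove_nradius_set (A : Matrix (Fin n) (Fin n) ℂ) :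
    BddAbove {r : ℝ | ∃ x : EuclideanSpace ℂ (Fin n), ‖x‖ = 1 ∧
      r = ‖⟪x, toEuclideanCLM (𝕜 := ℂ) A x⟫_ℂ‖} := by
  refine ⟨opNorm A, ?_⟩
  rintro r ⟨x, hx, rfl⟩
  simpa [hx, opNorm] using norm_inner_le_norm (𝕜 := ℂ) x (toEuclideanCLM (𝕜 := ℂ) A x) |>.trans
    (mul_le_mul_of_nonneg_left ((toEuclideanCLM (𝕜 := ℂ) A).le_opNorm x) (norm_nonneg x))

theorem norm_inner_le_nradius (A : Matrix (Fin n) (Fin n) ℂ) {x : EuclideanSpace ℂ (Fin n)}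
    (hx : ‖x‖ = 1) : ‖⟪x, toEuclideanCLM (𝕜 := ℂ) A x⟫_ℂ‖ ≤ nradius A :=
  le_csSup (bddAbove_nradius_set A) ⟨x, hx, rfl⟩

theorem nradius_nonneg (A : Matrix (Fin n) (Fin n) ℂ) : 0 ≤ nradius A :=
  Real.sSup_nonneg <| by rintro r ⟨x, -, rfl⟩; exact norm_nonneg _

theorem mul_nradius_le {A : Matrix (Fin n) (Fin n) ℂ} {c d : ℝ} (hc : 0 ≤ c) (hd : 0 ≤ d)
    (h : ∀ x : EuclideanSpace ℂ (Fin n), ‖x‖ = 1 → c * ‖⟪x, toEuclideanCLM (𝕜 := ℂ) A x⟫_ℂ‖ ≤ d) :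
    c * nradius A ≤ d := by
  rcases hc.eq_or_lt with rfl | hc
  · simpa using hd
  rw [mul_comm, ← le_div_iff₀ hc]
  refine Real.sSup_le ?_ (div_nonneg hd hc.le)
  rintro r ⟨x, hx, rfl⟩
  rw [le_div_iff₀ hc, mul_comm]
  exact h x hx

theorem InSector.abs_cos_mul_nradius_le_nradius_add {α : ℝ} {A B : Matrix (Fin n) (Fin n) ℂ}
    (hA : InSector α A) (hB : (matRe B).PosSemidef) :
    |Real.cos α| * nradius A ≤ nradius (A + B) := by
  refine mul_nradius_le (abs_nonneg _) (nradius_nonneg _) fun x hx => ?_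
  have hAx := re_inner_toEuclideanCLM_nonneg hA.1.posSemidef x
  have hBx := re_inner_toEuclideanCLM_nonneg hB x
  calc |Real.cos α| * ‖⟪x, toEuclideanCLM (𝕜 := ℂ) A x⟫_ℂ‖
      ≤ (⟪x, toEuclideanCLM (𝕜 := ℂ) A x⟫_ℂ).re := Complex.abs_cos_mul_norm_le_re (hA.2 x hx) hAx
    _ ≤ (⟪x, toEuclideanCLM (𝕜 := ℂ) (A + B) x⟫_ℂ).re := by
        rw [map_add, _root_.add_apply, inner_add_right, Complex.add_re]
        linarith
    _ ≤ ‖⟪x, toEuclideanCLM (𝕜 := ℂ) (A + B) x⟫_ℂ‖ := Complex.re_le_norm _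
    _ ≤ nradius (A + B) := norm_inner_le_nradius _ hx

end NumericalRadius

theorem stmt13_general {n : ℕ} {α : ℝ}
    {A B : Matrix (Fin n) (Fin n) ℂ} (hA : InSector α A) (hB : InSector α B) :
    Real.cos α ^ 2 * max (nradius A) (nradius B) ≤ nradius (A + B) := by
  have hcos : Real.cos α ^ 2 ≤ |Real.cos α| := by
    rw [← sq_abs]
    exact pow_le_of_le_one (abs_nonneg _) (Real.abs_cos_le_one α) two_ne_zero
  calc Real.cos α ^ 2 * max (nradius A) (nradius B)
      ≤ |Real.cos α| * max (nradius A) (nradius B) :=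
        mul_le_mul_of_nonneg_right hcos (le_max_of_le_left (nradius_nonneg A))
    _ = max (|Real.cos α| * nradius A) (|Real.cos α| * nradius B) :=
        mul_max_of_nonneg _ _ (abs_nonneg _)
    _ ≤ nradius (A + B) := max_le (hA.abs_cos_mul_nradius_le_nradius_add hB.1.posSemidef)
        (add_comm A B ▸ hB.abs_cos_mul_nradius_le_nradius_add hA.1.posSemidef)

theorem stmt13 {n : ℕ} (hn : 1 ≤ n) {α : ℝ} (hα0 : 0 ≤ α) (hα : α < Real.pi / 2)
    {A B : Matrix (Fin n) (Fin n) ℂ} (hA : InSector α A) (hB : InSector α B) :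
    Real.cos α ^ 2 * max (nradius A) (nradius B) ≤ nradius (A + B) :=
  stmt13_general hA hB
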